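/- arXiv:2304.07466 — 2 statements merged into one kernel-verified Lean document; each statement's English description precedes it below -/
import Mathlib

section
/- In the normal scale model: let A = 1 (MDPDE case, λ = 0, B = α ∈ (0,1]), σ_m → 0 and σ_{k_m} → 0 with σ_{k_m}/σ_m → 0, and η = 0. Then the ratio M_{φ_{σ_m}} / ∫ φ_{σ_m}^α (φ_{σ_{k_m}})^1 dx converges to (1+α)^{-1/2}, and the resulting breakdown bound min{((B·L)/(1+α))^{1/A}, 1 - (B/(1+α))^{1/A}, 1/2} equals α/(1+α)^{3/2}. -/
open MeasureTheory Real Filter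

/-!
Every integral involved is Gaussian: `φ_s^β φ_t` is a constant multiple of
`exp (-(β/(2s²) + 1/(2t²)) x²)`, so the ratio equals `√((1 + α (σk/σ)²) / (1 + α))` exactly,
and this tends to `(1 + α)^{-1/2}`. With `r = √(1 + α)` the three terms of the breakdown bound
are `α/r³`, `1/r²` and `1/2`, and `α ≤ 1 ≤ r` makes the first one the smallest.
-/

noncomputable def scaleNormalPDF (s x : ℝ) : ℝ :=
  (2 * π * s ^ 2) ^ (-(1 / 2 : ℝ)) * exp (-x ^ 2 / (2 * s ^ 2))

lemma scaleNormalPDF_rpow_mul (s t β x : ℝ) :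
    scaleNormalPDF s x ^ β * scaleNormalPDF t x
      = scaleNormalPDF s 0 ^ β * scaleNormalPDF t 0
        * exp (-(β / (2 * s ^ 2) + 1 / (2 * t ^ 2)) * x ^ 2) := by
  have hc : 0 ≤ (2 * π * s ^ 2) ^ (-(1 / 2 : ℝ)) := by positivity
  simp only [scaleNormalPDF, zero_pow two_ne_zero, neg_zero, zero_div, exp_zero, mul_one]
  rw [mul_rpow hc (exp_pos _).le, ← exp_mul, neg_mul, add_mul, neg_add, exp_add]
  field_simp

/-- If `β / (2 * s ^ 2) + 1 / (2 * t ^ 2) ≤ 0`, both sides are junk `0`s. -/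
lemma integral_scaleNormalPDF_rpow_mul (s t β : ℝ) :
    ∫ x, scaleNormalPDF s x ^ β * scaleNormalPDF t x
      = scaleNormalPDF s 0 ^ β * scaleNormalPDF t 0
        * √(π / (β / (2 * s ^ 2) + 1 / (2 * t ^ 2))) := by
  rw [funext (scaleNormalPDF_rpow_mul s t β), integral_const_mul, integral_gaussian]

lemma integral_scaleNormalPDF_rpow {s : ℝ} (hs : 0 < s) (β : ℝ) :
    ∫ x, scaleNormalPDF s x ^ (1 + β)
      = scaleNormalPDF s 0 ^ β * scaleNormalPDF s 0 * √(π / ((1 + β) / (2 * s ^ 2))) := by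
  have hpos (x : ℝ) : 0 < scaleNormalPDF s x := by unfold scaleNormalPDF; positivity
  simp_rw [add_comm 1 β, rpow_add (hpos _), rpow_one]
  rw [integral_scaleNormalPDF_rpow_mul]
  congr 3
  ring

lemma scaleNormalPDF_zero {s : ℝ} (hs : 0 < s) : scaleNormalPDF s 0 = (√(2 * π * s ^ 2))⁻¹ := by
  rw [scaleNormalPDF, rpow_neg (by positivity), sqrt_eq_rpow]
  simp

lemma integral_scaleNormalPDF_rpow_div_integral_rpow_mul {s t : ℝ} (hs : 0 < s) (ht : 0 < t) {β : ℝ}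
    (hβ : 0 ≤ β) :
    (∫ x, scaleNormalPDF s x ^ (1 + β)) / ∫ x, scaleNormalPDF s x ^ β * scaleNormalPDF t x
      = √((1 + β * (t / s) ^ 2) / (1 + β)) := by
  have hc : 0 < scaleNormalPDF s 0 ^ β := by rw [scaleNormalPDF_zero hs]; positivity
  rw [integral_scaleNormalPDF_rpow hs, integral_scaleNormalPDF_rpow_mul, mul_assoc, mul_assoc,
    mul_div_mul_left _ _ hc.ne', scaleNormalPDF_zero hs, scaleNormalPDF_zero ht,
    inv_mul_eq_div, inv_mul_eq_div, div_div_div_eq, ← sqrt_mul (by positivity),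
    ← sqrt_mul (by positivity), ← sqrt_div (by positivity)]
  congr 1
  field_simp
  ring

lemma tendsto_integral_scaleNormalPDF_rpow_div_integral_rpow_mul {σ σk : ℕ → ℝ}
    (hσ : ∀ m, 0 < σ m) (hσk : ∀ m, 0 < σk m)
    (hratio : Tendsto (fun m => σk m / σ m) atTop (nhds 0)) {β : ℝ} (hβ : 0 ≤ β) :
    Tendsto (fun m => (∫ x, scaleNormalPDF (σ m) x ^ (1 + β))
        / ∫ x, scaleNormalPDF (σ m) x ^ β * scaleNormalPDF (σk m) x)
      atTop (nhds ((1 + β) ^ (-(1 / 2 : ℝ)))) := by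
  simp_rw [integral_scaleNormalPDF_rpow_div_integral_rpow_mul (hσ _) (hσk _) hβ]
  have hlim := ((((hratio.pow 2).const_mul β).const_add 1).div_const (1 + β)).sqrt
  convert hlim using 2
  rw [rpow_neg (by positivity), ← sqrt_eq_rpow, ← sqrt_inv]
  simp

lemma mdpde_breakdown_bound_eq {α : ℝ} (hα0 : 0 < α) (hα1 : α ≤ 1) :
    min (min ((α * (1 + α) ^ (-(1 / 2 : ℝ)) / (1 + α)) ^ (1 / (1 : ℝ)))
          (1 - (α / (1 + α)) ^ (1 / (1 : ℝ)))) (1 / 2)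
      = α * (1 + α) ^ (-(3 / 2 : ℝ)) := by
  have hx : 0 < 1 + α := by linarith
  have h12 : (1 + α) ^ (-(1 / 2 : ℝ)) = (√(1 + α))⁻¹ := by rw [rpow_neg hx.le, sqrt_eq_rpow]
  have h32 : (1 + α) ^ (-(3 / 2 : ℝ)) = (√(1 + α))⁻¹ / (1 + α) := by
    rw [show -(3 / 2 : ℝ) = -(1 / 2) - 1 by norm_num, rpow_sub_one hx.ne', h12]
  have hs1 : 1 ≤ √(1 + α) := by rw [one_le_sqrt]; linarith
  have hs2 : √(1 + α) ^ 2 = 1 + α := sq_sqrt hx.le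
  have hle_inv : α * ((√(1 + α))⁻¹ / (1 + α)) ≤ 1 - α / (1 + α) := by
    rw [← mul_div_assoc, div_le_iff₀ hx, ← div_eq_mul_inv, div_le_iff₀ (by positivity)]
    field_simp
    nlinarith
  have hle_half : α * ((√(1 + α))⁻¹ / (1 + α)) ≤ 1 / 2 := by
    rw [← mul_div_assoc, div_le_iff₀ hx, ← div_eq_mul_inv, div_le_iff₀ (by positivity)]
    nlinarith
  rw [div_one, rpow_one, rpow_one, h32, h12, mul_div_assoc,
    min_eq_left hle_inv, min_eq_left hle_half]

theorem normal_scale_mdpde_breakdown_general (α : ℝ) (hα0 : 0 < α) (hα1 : α ≤ 1)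
    (σ σk : ℕ → ℝ) (hσ : ∀ m, 0 < σ m) (hσk : ∀ m, 0 < σk m)
    (hratio : Tendsto (fun m => σk m / σ m) atTop (nhds 0)) :
    Tendsto (fun m =>
        (∫ x : ℝ, ((2 * π * (σ m) ^ 2) ^ (-(1 / 2 : ℝ))
            * Real.exp (-x ^ 2 / (2 * (σ m) ^ 2))) ^ (1 + α))
        / (∫ x : ℝ, ((2 * π * (σ m) ^ 2) ^ (-(1 / 2 : ℝ))
            * Real.exp (-x ^ 2 / (2 * (σ m) ^ 2))) ^ α
          * ((2 * π * (σk m) ^ 2) ^ (-(1 / 2 : ℝ))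
            * Real.exp (-x ^ 2 / (2 * (σk m) ^ 2)))))
      atTop (nhds ((1 + α) ^ (-(1 / 2 : ℝ)))) ∧
    min (min ((α * (1 + α) ^ (-(1 / 2 : ℝ)) / (1 + α)) ^ (1 / (1 : ℝ)))
          (1 - (α / (1 + α)) ^ (1 / (1 : ℝ)))) (1 / 2)
      = α * (1 + α) ^ (-(3 / 2 : ℝ)) :=
  ⟨tendsto_integral_scaleNormalPDF_rpow_div_integral_rpow_mul hσ hσk hratio hα0.le,
    mdpde_breakdown_bound_eq hα0 hα1⟩

/-- Normal scale model, MDPDE case (`A = 1`, `B = α`), contamination by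
mean-zero normals with `σ_{k_m}/σ_m → 0`: the ratio
`M_{φ_{σ_m}} / ∫ φ_{σ_m}^α φ_{σ_{k_m}}` converges to `(1+α)^{-1/2}`, and the
breakdown bound `min{((B·L)/(1+α))^{1/A}, 1 - (B/(1+α))^{1/A}, 1/2}` equals
`α/(1+α)^{3/2}`. -/
theorem normal_scale_mdpde_breakdown (α : ℝ) (hα0 : 0 < α) (hα1 : α ≤ 1)
    (σ σk : ℕ → ℝ) (hσ : ∀ m, 0 < σ m) (hσk : ∀ m, 0 < σk m)
    (hσ0 : Tendsto σ atTop (nhds 0)) (hσk0 : Tendsto σk atTop (nhds 0))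
    (hratio : Tendsto (fun m => σk m / σ m) atTop (nhds 0)) :
    Tendsto (fun m =>
        (∫ x : ℝ, ((2 * π * (σ m) ^ 2) ^ (-(1 / 2 : ℝ))
            * Real.exp (-x ^ 2 / (2 * (σ m) ^ 2))) ^ (1 + α))
        / (∫ x : ℝ, ((2 * π * (σ m) ^ 2) ^ (-(1 / 2 : ℝ))
            * Real.exp (-x ^ 2 / (2 * (σ m) ^ 2))) ^ α
          * ((2 * π * (σk m) ^ 2) ^ (-(1 / 2 : ℝ))
            * Real.exp (-x ^ 2 / (2 * (σk m) ^ 2)))))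
      atTop (nhds ((1 + α) ^ (-(1 / 2 : ℝ)))) ∧
    min (min ((α * (1 + α) ^ (-(1 / 2 : ℝ)) / (1 + α)) ^ (1 / (1 : ℝ)))
          (1 - (α / (1 + α)) ^ (1 / (1 : ℝ)))) (1 / 2)
      = α * (1 + α) ^ (-(3 / 2 : ℝ)) :=
  normal_scale_mdpde_breakdown_general α hα0 hα1 σ σk hσ hσk hratio
end

section
/- Let 0 ≤ α < 1 and λ ∈ ℝ with A = 1 + λ(1-α) ∈ (0,1) and B = α - λ(1-α) > 0. Suppose σ_m, τ_m > 0 with τ_m/σ_m → 0 and η ≠ 0 fixed or η = 0. Then the ratio M_{φ_{0,σ_m}} / ∫ φ_{0,σ_m}^B φ_{η,τ_m}^A dx = σ_m^{-A} τ_m^{A-1} ((Bτ_m² + Aσ_m²)/(1+α))^{1/2} exp(ABη²/(2(Bτ_m² + Aσ_m²))) tends to +∞ as m → ∞ (whenever σ_m is bounded). -/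
open MeasureTheory Real Filter Topology

/-!
A power of a normal density is a constant times a Gaussian, and after completing the square so
is the product `φ_{0,σ}^B φ_{η,τ}^A`; hence both integrals are Gaussian integrals and, using
`A + B = 1 + α`, their ratio has the closed form `normalScaleRatio`. Dropping `Bτ²` and the
exponential factor (which is `≥ 1`) bounds it below by `√(A/(1+α)) (τ/σ)^(A-1)`, and this tends
to `∞` as `τ/σ → 0⁺` because `A - 1 < 0`.
-/

theorem integral_exp_neg_mul_sub_sq_add (b c d : ℝ) :
    ∫ x : ℝ, exp (-b * (x - c) ^ 2 + d) = exp d * √(π / b) := by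
  simp_rw [exp_add, integral_mul_const, integral_sub_right_eq_self (fun x => exp (-b * x ^ 2)),
    integral_gaussian, mul_comm]

theorem rpow_mul_exp_rpow {c : ℝ} (hc : 0 ≤ c) (q u p : ℝ) :
    (c ^ q * exp u) ^ p = c ^ (q * p) * exp (u * p) := by
  rw [mul_rpow (rpow_nonneg hc q) (exp_pos u).le, ← rpow_mul hc, ← exp_mul]

theorem integral_normal_density_rpow (s p : ℝ) :
    ∫ x : ℝ, ((2 * π * s ^ 2) ^ (-(1 / 2 : ℝ)) * exp (-x ^ 2 / (2 * s ^ 2))) ^ p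
      = (2 * π * s ^ 2) ^ (-(1 / 2 : ℝ) * p) * √(π / (p / (2 * s ^ 2))) := by
  have hexp (x : ℝ) : -x ^ 2 / (2 * s ^ 2) * p = -(p / (2 * s ^ 2)) * (x - 0) ^ 2 + 0 := by ring
  simp_rw [rpow_mul_exp_rpow (by positivity : 0 ≤ 2 * π * s ^ 2), hexp, integral_const_mul,
    integral_exp_neg_mul_sub_sq_add, exp_zero, one_mul]

theorem mul_sq_div_add_mul_sq_div_eq {A B η s t : ℝ} (hs : s ≠ 0) (ht : t ≠ 0)
    (hQ : B * t ^ 2 + A * s ^ 2 ≠ 0) (x : ℝ) :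
    B * x ^ 2 / (2 * s ^ 2) + A * (x - η) ^ 2 / (2 * t ^ 2)
      = (B * t ^ 2 + A * s ^ 2) / (2 * s ^ 2 * t ^ 2)
          * (x - A * η * s ^ 2 / (B * t ^ 2 + A * s ^ 2)) ^ 2
        + A * B * η ^ 2 / (2 * (B * t ^ 2 + A * s ^ 2)) := by
  set Q := B * t ^ 2 + A * s ^ 2 with hQ_def
  field_simp
  rw [hQ_def]
  ring

theorem integral_normal_density_rpow_mul (A B η : ℝ) {s t : ℝ} (hs : s ≠ 0) (ht : t ≠ 0)
    (hQ : B * t ^ 2 + A * s ^ 2 ≠ 0) :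
    ∫ x : ℝ, ((2 * π * s ^ 2) ^ (-(1 / 2 : ℝ)) * exp (-x ^ 2 / (2 * s ^ 2))) ^ B
        * ((2 * π * t ^ 2) ^ (-(1 / 2 : ℝ)) * exp (-(x - η) ^ 2 / (2 * t ^ 2))) ^ A
      = (2 * π * s ^ 2) ^ (-(1 / 2 : ℝ) * B) * (2 * π * t ^ 2) ^ (-(1 / 2 : ℝ) * A)
        * (exp (-(A * B * η ^ 2 / (2 * (B * t ^ 2 + A * s ^ 2))))
          * √(π / ((B * t ^ 2 + A * s ^ 2) / (2 * s ^ 2 * t ^ 2)))) := by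
  have hexp (x : ℝ) : -x ^ 2 / (2 * s ^ 2) * B + -(x - η) ^ 2 / (2 * t ^ 2) * A
      = -((B * t ^ 2 + A * s ^ 2) / (2 * s ^ 2 * t ^ 2))
          * (x - A * η * s ^ 2 / (B * t ^ 2 + A * s ^ 2)) ^ 2
        + -(A * B * η ^ 2 / (2 * (B * t ^ 2 + A * s ^ 2))) := by
    linear_combination -(mul_sq_div_add_mul_sq_div_eq (η := η) hs ht hQ x)
  simp_rw [rpow_mul_exp_rpow (by positivity : 0 ≤ 2 * π * s ^ 2),
    rpow_mul_exp_rpow (by positivity : 0 ≤ 2 * π * t ^ 2), mul_mul_mul_comm _ (exp _),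
    ← exp_add, hexp, integral_const_mul, integral_exp_neg_mul_sub_sq_add]

/-- The closed form of `M_{φ_{0,s}} / ∫ φ_{0,s}^B φ_{η,t}^A`. -/
noncomputable def normalScaleRatio (α A B η s t : ℝ) : ℝ :=
  s ^ (-A) * t ^ (A - 1) * ((B * t ^ 2 + A * s ^ 2) / (1 + α)) ^ ((1 : ℝ) / 2)
    * exp (A * B * η ^ 2 / (2 * (B * t ^ 2 + A * s ^ 2)))

theorem integral_ratio_eq_normalScaleRatio {α A B : ℝ} (η : ℝ) (hα : 0 < 1 + α) (hA : 0 < A)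
    (hB : 0 < B) (hAB : A + B = 1 + α) {s t : ℝ} (hs : 0 < s) (ht : 0 < t) :
    (∫ x : ℝ, ((2 * π * s ^ 2) ^ (-(1 / 2 : ℝ)) * exp (-x ^ 2 / (2 * s ^ 2))) ^ (1 + α))
      / (∫ x : ℝ, ((2 * π * s ^ 2) ^ (-(1 / 2 : ℝ)) * exp (-x ^ 2 / (2 * s ^ 2))) ^ B
          * ((2 * π * t ^ 2) ^ (-(1 / 2 : ℝ)) * exp (-(x - η) ^ 2 / (2 * t ^ 2))) ^ A)
      = normalScaleRatio α A B η s t := by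
  have hQ : 0 < B * t ^ 2 + A * s ^ 2 := by positivity
  rw [integral_normal_density_rpow, integral_normal_density_rpow_mul A B η hs.ne' ht.ne' hQ.ne']
  refine log_injOn_pos (Set.mem_Ioi.2 (by positivity))
    (Set.mem_Ioi.2 (by unfold normalScaleRatio; positivity)) ?_
  simp (disch := positivity) only [normalScaleRatio, log_div, log_mul, log_rpow, log_sqrt,
    log_exp, log_pow]
  obtain rfl : α = A + B - 1 := by linarith
  ring

theorem sqrt_mul_div_rpow_le_normalScaleRatio {α A B : ℝ} (η : ℝ) (hα : 0 < 1 + α) (hA : 0 < A)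
    (hB : 0 ≤ B) {s t : ℝ} (hs : 0 < s) (ht : 0 < t) :
    √(A / (1 + α)) * (t / s) ^ (A - 1) ≤ normalScaleRatio α A B η s t := by
  calc √(A / (1 + α)) * (t / s) ^ (A - 1)
      = s ^ (-A) * t ^ (A - 1) * (A * s ^ 2 / (1 + α)) ^ ((1 : ℝ) / 2) * 1 := by
        refine log_injOn_pos (Set.mem_Ioi.2 (by positivity)) (Set.mem_Ioi.2 (by positivity)) ?_
        simp (disch := positivity) only [log_div, log_mul, log_rpow, log_sqrt, log_pow, log_one]
        ring
    _ ≤ normalScaleRatio α A B η s t := by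
        unfold normalScaleRatio
        gcongr
        · exact le_add_of_nonneg_left (by positivity)
        · exact one_le_exp (by positivity)

theorem tendsto_normalScaleRatio_atTop {ι : Type*} {l : Filter ι} {α A B : ℝ} (η : ℝ)
    (hα : 0 < 1 + α) (hA0 : 0 < A) (hA1 : A < 1) (hB : 0 ≤ B) {σ τ : ι → ℝ}
    (hσ : ∀ m, 0 < σ m) (hτ : ∀ m, 0 < τ m) (hratio : Tendsto (fun m => τ m / σ m) l (𝓝 0)) :
    Tendsto (fun m => normalScaleRatio α A B η (σ m) (τ m)) l atTop := by
  have hratio' : Tendsto (fun m => τ m / σ m) l (𝓝[>] 0) :=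
    tendsto_nhdsWithin_iff.2 ⟨hratio, .of_forall fun m => div_pos (hτ m) (hσ m)⟩
  refine tendsto_atTop_mono
    (fun m => sqrt_mul_div_rpow_le_normalScaleRatio η hα hA0 hB (hσ m) (hτ m)) ?_
  exact ((tendsto_rpow_neg_nhdsGT_zero (by linarith)).comp hratio').const_mul_atTop
    (by positivity)

theorem normal_scale_ratio_tendsto_top_general (α A B η : ℝ)
    (hα0 : 0 ≤ α) (hA0 : 0 < A) (hA1 : A < 1) (hB : 0 < B)
    (hAdef : ∃ lam : ℝ, A = 1 + lam * (1 - α) ∧ B = α - lam * (1 - α))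
    (σ τ : ℕ → ℝ) (hσ : ∀ m, 0 < σ m) (hτ : ∀ m, 0 < τ m)
    (hratio : Tendsto (fun m => τ m / σ m) atTop (nhds 0)) :
    (∀ m,
      (∫ x : ℝ, ((2 * π * (σ m) ^ 2) ^ (-(1 / 2 : ℝ))
          * Real.exp (-x ^ 2 / (2 * (σ m) ^ 2))) ^ (1 + α))
      / (∫ x : ℝ, ((2 * π * (σ m) ^ 2) ^ (-(1 / 2 : ℝ))
            * Real.exp (-x ^ 2 / (2 * (σ m) ^ 2))) ^ B
          * ((2 * π * (τ m) ^ 2) ^ (-(1 / 2 : ℝ))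
            * Real.exp (-(x - η) ^ 2 / (2 * (τ m) ^ 2))) ^ A)
      = (σ m) ^ (-A) * (τ m) ^ (A - 1)
          * ((B * (τ m) ^ 2 + A * (σ m) ^ 2) / (1 + α)) ^ ((1 : ℝ) / 2)
          * Real.exp (A * B * η ^ 2 / (2 * (B * (τ m) ^ 2 + A * (σ m) ^ 2)))) ∧
    Tendsto (fun m =>
        (σ m) ^ (-A) * (τ m) ^ (A - 1)
          * ((B * (τ m) ^ 2 + A * (σ m) ^ 2) / (1 + α)) ^ ((1 : ℝ) / 2)
          * Real.exp (A * B * η ^ 2 / (2 * (B * (τ m) ^ 2 + A * (σ m) ^ 2))))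
      atTop atTop := by
  have hα : 0 < 1 + α := by linarith
  obtain ⟨lam, rfl, rfl⟩ := hAdef
  exact ⟨fun m => integral_ratio_eq_normalScaleRatio η hα hA0 hB (by ring) (hσ m) (hτ m),
    tendsto_normalScaleRatio_atTop η hα hA0 hA1 hB.le hσ hτ hratio⟩

/-- Normal scale model with `0 < A < 1`: the ratio
`M_{φ_{0,σ_m}} / ∫ φ_{0,σ_m}^B φ_{η,τ_m}^A` equals the closed form
`σ_m^{-A} τ_m^{A-1} ((Bτ_m² + Aσ_m²)/(1+α))^{1/2} exp(ABη²/(2(Bτ_m² + Aσ_m²)))`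
and tends to `+∞` whenever `τ_m/σ_m → 0` and `σ_m` is bounded. -/
theorem normal_scale_ratio_tendsto_top (α A B η : ℝ)
    (hα0 : 0 ≤ α) (hα1 : α < 1) (hA0 : 0 < A) (hA1 : A < 1) (hB : 0 < B)
    (hAdef : ∃ lam : ℝ, A = 1 + lam * (1 - α) ∧ B = α - lam * (1 - α))
    (σ τ : ℕ → ℝ) (hσ : ∀ m, 0 < σ m) (hτ : ∀ m, 0 < τ m)
    (hratio : Tendsto (fun m => τ m / σ m) atTop (nhds 0))
    (hbound : ∃ C : ℝ, ∀ m, σ m ≤ C) :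
    (∀ m,
      (∫ x : ℝ, ((2 * π * (σ m) ^ 2) ^ (-(1 / 2 : ℝ))
          * Real.exp (-x ^ 2 / (2 * (σ m) ^ 2))) ^ (1 + α))
      / (∫ x : ℝ, ((2 * π * (σ m) ^ 2) ^ (-(1 / 2 : ℝ))
            * Real.exp (-x ^ 2 / (2 * (σ m) ^ 2))) ^ B
          * ((2 * π * (τ m) ^ 2) ^ (-(1 / 2 : ℝ))
            * Real.exp (-(x - η) ^ 2 / (2 * (τ m) ^ 2))) ^ A)
      = (σ m) ^ (-A) * (τ m) ^ (A - 1)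
          * ((B * (τ m) ^ 2 + A * (σ m) ^ 2) / (1 + α)) ^ ((1 : ℝ) / 2)
          * Real.exp (A * B * η ^ 2 / (2 * (B * (τ m) ^ 2 + A * (σ m) ^ 2)))) ∧
    Tendsto (fun m =>
        (σ m) ^ (-A) * (τ m) ^ (A - 1)
          * ((B * (τ m) ^ 2 + A * (σ m) ^ 2) / (1 + α)) ^ ((1 : ℝ) / 2)
          * Real.exp (A * B * η ^ 2 / (2 * (B * (τ m) ^ 2 + A * (σ m) ^ 2))))
      atTop atTop :=
  normal_scale_ratio_tendsto_top_general α A B η hα0 hA0 hA1 hB hAdef σ τ hσ hτ hratio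
end
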